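/- Let 0 < s < 1/2, p ≥ 1, q ≥ 1, and let φ : ℝ³ → ℝ be a fixed smooth nonnegative function, compactly supported in B₁, with ∫_{ℝ³} φ(x) dx = 1. Then there exists a constant C > 0, depending only on s, p, q, φ, such that the following holds. Let g : ℝ³ → ℝ³ be measurable with Mg ∈ L^p(B₁), and let f ∈ L^q(ℝ³) be such that for almost every x ∈ B₁ the integral ∫_{ℝ³} |g(y)| / |x−y|^{2+2s} dy is finite and f(x) = ∫_{ℝ³} g(y) · (x−y) / |x−y|^{3+2s} dy. Then ∫_{B₁} |f(x)| dx ≤ C ( |∫_{ℝ³} f(x) φ(x) dx| + (∫_{B₁} |Mg(x)|^p dx)^{1/p} ). -/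

import Mathlib

open MeasureTheory Set Metric
open scoped ENNReal NNReal

noncomputable section

/-- `ℝ³` with the Euclidean norm. -/
abbrev E3 := EuclideanSpace ℝ (Fin 3)

/-- Spatial partial derivative `∂ⱼ f` of a scalar function. -/
def pd (f : E3 → ℝ) (j : Fin 3) (x : E3) : ℝ :=
  fderiv ℝ f x (EuclideanSpace.single j 1)

/-- `|∇f|² = Σ_{i,j} |∂ⱼ fᵢ|²`. -/
def gradSq (f : E3 → E3) (x : E3) : ℝ :=
  ∑ i, ∑ j, (pd (fun y => f y i) j x) ^ 2

/-- `(u,P)` is a smooth solution of the incompressible Navier–Stokes equations on the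
open set `U ⊆ ℝ × ℝ³`: `u` and `P` are infinitely differentiable on `U`, and on `U` one has
`∂ₜuᵢ + Σⱼ uⱼ ∂ⱼuᵢ + ∂ᵢP − Δuᵢ = 0` and `div u = 0`. -/
def IsNSSolution (u : ℝ → E3 → E3) (P : ℝ → E3 → ℝ) (U : Set (ℝ × E3)) : Prop :=
  ContDiffOn ℝ (⊤ : ℕ∞) (fun q : ℝ × E3 => u q.1 q.2) U ∧
  ContDiffOn ℝ (⊤ : ℕ∞) (fun q : ℝ × E3 => P q.1 q.2) U ∧
  (∀ q ∈ U, ∀ i : Fin 3,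
    deriv (fun s => u s q.2 i) q.1
      + (∑ j, u q.1 q.2 j * pd (fun y => u q.1 y i) j q.2)
      + pd (fun y => P q.1 y) i q.2
      - ∑ j, pd (pd (fun y => u q.1 y i) j) j q.2 = 0) ∧
  (∀ q ∈ U, ∑ i, pd (fun y => u q.1 y i) i q.2 = 0)

/-- The (spatial) Hardy–Littlewood maximal function
`Mg(x) = sup_{r>0} r⁻³ ∫_{B_r} |g(x+y)| dy`, valued in `ℝ≥0∞`. -/
def maxFn (g : E3 → E3) (x : E3) : ℝ≥0∞ :=
  ⨆ (r : ℝ) (_ : 0 < r),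
    ENNReal.ofReal (r ^ (-(3:ℝ))) * ∫⁻ y in ball (0:E3) r, ENNReal.ofReal ‖g (x + y)‖

namespace NSaux

/-- dyadic sub-maximal function -/
def dyad (g : E3 → E3) (x : E3) : ℝ≥0∞ :=
  ⨆ k : ℤ, ENNReal.ofReal (((2:ℝ)^k) ^ (-(3:ℝ))) *
    ∫⁻ y in ball x ((2:ℝ)^k), ENNReal.ofReal ‖g y‖

lemma two_zpow_pos (k : ℤ) : (0:ℝ) < 2 ^ k := by positivity

lemma lintegral_ball_shift (F : E3 → ℝ≥0∞) (x : E3) (r : ℝ) :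
    ∫⁻ y in ball x r, F y = ∫⁻ y in ball (0:E3) r, F (x + y) := by
  have hmp : MeasurePreserving (fun y : E3 => x + y) volume volume :=
    measurePreserving_add_left volume x
  have hemb : MeasurableEmbedding (fun y : E3 => x + y) :=
    (MeasurableEquiv.addLeft x).measurableEmbedding
  have himg : (fun y : E3 => x + y) '' ball (0:E3) r = ball x r := by
    ext w
    simp only [mem_image, mem_ball, dist_zero_right, dist_eq_norm]
    constructor
    · rintro ⟨z, hz, rfl⟩; simpa using hz
    · intro hw; exact ⟨w - x, by simpa [norm_sub_rev] using hw, by abel⟩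
  rw [← himg, ← hmp.setLIntegral_comp_emb hemb F (ball (0:E3) r)]

lemma dyad_le_maxFn (g : E3 → E3) (x : E3) : dyad g x ≤ maxFn g x := by
  refine iSup_le fun k => ?_
  rw [lintegral_ball_shift]
  exact le_iSup₂ (f := fun (r : ℝ) (_ : 0 < r) =>
    ENNReal.ofReal (r ^ (-(3:ℝ))) * ∫⁻ y in ball (0:E3) r, ENNReal.ofReal ‖g (x + y)‖)
    ((2:ℝ)^k) (two_zpow_pos k)

lemma meas_ballint (g : E3 → E3) (hg : Measurable g) (r : ℝ) :
    Measurable fun x : E3 => ∫⁻ y in ball x r, ENNReal.ofReal ‖g y‖ := by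
  have h1 : ∀ x : E3, ∫⁻ y in ball x r, ENNReal.ofReal ‖g y‖
      = ∫⁻ y, ({q : E3 × E3 | dist q.2 q.1 < r}.indicator
          (fun q : E3 × E3 => ENNReal.ofReal ‖g q.2‖)) (x, y) := by
    intro x
    rw [← lintegral_indicator measurableSet_ball (fun y => ENNReal.ofReal ‖g y‖)]
    refine lintegral_congr fun y => ?_
    by_cases h : dist y x < r
    · simp [indicator, Metric.mem_ball, h]
    · simp [indicator, Metric.mem_ball, h]
  simp_rw [h1]
  apply Measurable.lintegral_prod_right'
    (f := {q : E3 × E3 | dist q.2 q.1 < r}.indicator fun q : E3 × E3 => ENNReal.ofReal ‖g q.2‖)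
  exact Measurable.indicator (by fun_prop)
    (isOpen_lt (by fun_prop) continuous_const).measurableSet

lemma dyad_meas (g : E3 → E3) (hg : Measurable g) : Measurable (dyad g) := by
  apply Measurable.iSup
  intro k
  exact (meas_ballint g hg _).const_mul _


lemma annulus_bound (g : E3 → E3) (hg : Measurable g) (x : E3) (m : ℤ) (e : ℝ) (he : e ≤ 0) :
    ∫⁻ y in {y : E3 | (2:ℝ)^m ≤ dist x y ∧ dist x y < (2:ℝ)^(m+1)},
        ENNReal.ofReal (‖g y‖ * dist x y ^ e)
      ≤ ENNReal.ofReal (((2:ℝ)^m) ^ e * ((2:ℝ)^(m+1)) ^ (3:ℝ)) * dyad g x := by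
  have h2m : (0:ℝ) < 2^m := two_zpow_pos m
  have h2m1 : (0:ℝ) < 2^(m+1) := two_zpow_pos (m+1)
  have step1 : ∫⁻ y in {y : E3 | (2:ℝ)^m ≤ dist x y ∧ dist x y < (2:ℝ)^(m+1)},
        ENNReal.ofReal (‖g y‖ * dist x y ^ e)
      ≤ ∫⁻ y in {y : E3 | (2:ℝ)^m ≤ dist x y ∧ dist x y < (2:ℝ)^(m+1)},
        ENNReal.ofReal (((2:ℝ)^m) ^ e) * ENNReal.ofReal ‖g y‖ := by
    refine setLIntegral_mono (by fun_prop) fun y hy => ?_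
    rw [← ENNReal.ofReal_mul (by positivity)]
    apply ENNReal.ofReal_le_ofReal
    rw [mul_comm (((2:ℝ)^m) ^ e)]
    exact mul_le_mul_of_nonneg_left
      (Real.rpow_le_rpow_of_nonpos h2m hy.1 he) (norm_nonneg _)
  have step2 : ∫⁻ y in {y : E3 | (2:ℝ)^m ≤ dist x y ∧ dist x y < (2:ℝ)^(m+1)},
        ENNReal.ofReal (((2:ℝ)^m) ^ e) * ENNReal.ofReal ‖g y‖
      ≤ ENNReal.ofReal (((2:ℝ)^m) ^ e) * ∫⁻ y in ball x ((2:ℝ)^(m+1)), ENNReal.ofReal ‖g y‖ := by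
    rw [lintegral_const_mul' _ _ ENNReal.ofReal_ne_top]
    apply mul_le_mul_right
    refine lintegral_mono_set fun y hy => ?_
    rw [mem_ball, dist_comm]
    exact hy.2
  have step3 : ∫⁻ y in ball x ((2:ℝ)^(m+1)), ENNReal.ofReal ‖g y‖
      ≤ ENNReal.ofReal (((2:ℝ)^(m+1)) ^ (3:ℝ)) * dyad g x := by
    have key : ENNReal.ofReal (((2:ℝ)^(m+1)) ^ (3:ℝ)) *
        (ENNReal.ofReal (((2:ℝ)^(m+1)) ^ (-(3:ℝ))) *
          ∫⁻ y in ball x ((2:ℝ)^(m+1)), ENNReal.ofReal ‖g y‖)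
        = ∫⁻ y in ball x ((2:ℝ)^(m+1)), ENNReal.ofReal ‖g y‖ := by
      rw [← mul_assoc, ← ENNReal.ofReal_mul (by positivity),
        ← Real.rpow_add h2m1, add_neg_cancel, Real.rpow_zero, ENNReal.ofReal_one, one_mul]
    rw [← key]
    apply mul_le_mul_right
    exact le_iSup (fun k : ℤ => ENNReal.ofReal (((2:ℝ)^k) ^ (-(3:ℝ))) *
      ∫⁻ y in ball x ((2:ℝ)^k), ENNReal.ofReal ‖g y‖) (m+1)
  calc _ ≤ _ := step1
    _ ≤ _ := step2
    _ ≤ ENNReal.ofReal (((2:ℝ)^m) ^ e) *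
        (ENNReal.ofReal (((2:ℝ)^(m+1)) ^ (3:ℝ)) * dyad g x) := mul_le_mul_right step3 _
    _ = _ := by rw [ENNReal.ofReal_mul (by positivity), mul_assoc]

lemma cover_far {t : ℝ} (ht : 2 ≤ t) :
    ∃ k : ℕ, (2:ℝ)^((k:ℤ)+1) ≤ t ∧ t < (2:ℝ)^((k:ℤ)+2) := by
  obtain ⟨n, hn⟩ := pow_unbounded_of_one_lt t (by norm_num : (1:ℝ) < 2)
  have hex : ∃ n : ℕ, t < 2^n := ⟨n, hn⟩
  classical
  have hn₀ : t < 2 ^ Nat.find hex := Nat.find_spec hex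
  have h2 : 2 ≤ Nat.find hex := by
    by_contra h
    push_neg at h
    have hle : (2:ℝ) ^ Nat.find hex ≤ 2 ^ 1 :=
      pow_le_pow_right₀ (by norm_num) (by omega)
    rw [pow_one] at hle
    linarith
  refine ⟨Nat.find hex - 2, ?_, ?_⟩
  · have hmin : ¬ t < 2 ^ (Nat.find hex - 1) := Nat.find_min hex (by omega)
    push_neg at hmin
    have hcast : ((Nat.find hex - 2 : ℕ):ℤ) + 1 = ((Nat.find hex - 1 : ℕ):ℤ) := by omega
    rw [hcast, zpow_natCast]
    exact hmin
  · have hcast : ((Nat.find hex - 2 : ℕ):ℤ) + 2 = ((Nat.find hex : ℕ):ℤ) := by omega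
    rw [hcast, zpow_natCast]
    exact hn₀

lemma cover_near {t : ℝ} (h0 : 0 < t) (h4 : t < 4) :
    ∃ k : ℕ, (2:ℝ)^(1-(k:ℤ)) ≤ t ∧ t < (2:ℝ)^(2-(k:ℤ)) := by
  have hex : ∃ n : ℕ, (2:ℝ)^(1-(n:ℤ)) ≤ t := by
    obtain ⟨n, hn⟩ := exists_pow_lt_of_lt_one h0 (by norm_num : (1/2:ℝ) < 1)
    refine ⟨n+1, ?_⟩
    have e1 : (1:ℤ) - ((n+1:ℕ):ℤ) = -(n:ℤ) := by push_cast; ring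
    rw [e1, zpow_neg, zpow_natCast]
    simpa [one_div, inv_pow] using hn.le
  classical
  have h1 : (2:ℝ)^(1-(Nat.find hex:ℤ)) ≤ t := Nat.find_spec hex
  rcases Nat.eq_zero_or_pos (Nat.find hex) with h0' | hpos
  · refine ⟨0, ?_, ?_⟩
    · have := h0' ▸ h1; simpa using this
    · norm_num; exact h4
  · refine ⟨Nat.find hex, h1, ?_⟩
    have hmin : ¬ (2:ℝ)^(1-((Nat.find hex - 1 : ℕ):ℤ)) ≤ t := Nat.find_min hex (by omega)
    push_neg at hmin
    have hcast : (1:ℤ) - ((Nat.find hex - 1 : ℕ):ℤ) = 2 - (Nat.find hex:ℤ) := by omega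
    rw [hcast] at hmin
    exact hmin

lemma const_far (b : ℝ) (k : ℕ) :
    ((2:ℝ)^((k:ℤ)+1)) ^ (-b) * ((2:ℝ)^((k:ℤ)+2)) ^ (3:ℝ)
      = (2:ℝ)^((6:ℝ)-b) * ((2:ℝ)^((3:ℝ)-b))^k := by
  have h1 : ((2:ℝ)^((k:ℤ)+1)) = (2:ℝ) ^ (((k:ℝ))+1) := by
    rw [← Real.rpow_intCast 2 ((k:ℤ)+1)]; norm_num
  have h2 : ((2:ℝ)^((k:ℤ)+2)) = (2:ℝ) ^ (((k:ℝ))+2) := by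
    rw [← Real.rpow_intCast 2 ((k:ℤ)+2)]; norm_num
  rw [h1, h2, ← Real.rpow_natCast ((2:ℝ)^((3:ℝ)-b)) k,
    ← Real.rpow_mul (by norm_num : (0:ℝ) ≤ 2), ← Real.rpow_mul (by norm_num : (0:ℝ) ≤ 2),
    ← Real.rpow_mul (by norm_num : (0:ℝ) ≤ 2),
    ← Real.rpow_add two_pos, ← Real.rpow_add two_pos]
  congr 1
  ring

lemma const_near (c : ℝ) (k : ℕ) :
    ((2:ℝ)^(1-(k:ℤ))) ^ (-c) * ((2:ℝ)^(1-(k:ℤ)+1)) ^ (3:ℝ)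
      = (2:ℝ)^((6:ℝ)-c) * ((2:ℝ)^(c-(3:ℝ)))^k := by
  have h1 : ((2:ℝ)^(1-(k:ℤ))) = (2:ℝ) ^ ((1:ℝ)-(k:ℝ)) := by
    rw [← Real.rpow_intCast 2 (1-(k:ℤ))]; norm_num
  have h2 : ((2:ℝ)^(1-(k:ℤ)+1)) = (2:ℝ) ^ ((1:ℝ)-(k:ℝ)+1) := by
    rw [← Real.rpow_intCast 2 (1-(k:ℤ)+1)]; norm_num
  rw [h1, h2, ← Real.rpow_natCast ((2:ℝ)^(c-(3:ℝ))) k,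
    ← Real.rpow_mul (by norm_num : (0:ℝ) ≤ 2), ← Real.rpow_mul (by norm_num : (0:ℝ) ≤ 2),
    ← Real.rpow_mul (by norm_num : (0:ℝ) ≤ 2),
    ← Real.rpow_add two_pos, ← Real.rpow_add two_pos]
  congr 1
  ring

lemma geom_sum (c q : ℝ) (hc : 0 ≤ c) (hq : 0 ≤ q) :
    ∑' k : ℕ, ENNReal.ofReal (c * q^k) = ENNReal.ofReal c * (1 - ENNReal.ofReal q)⁻¹ := by
  have : ∀ k : ℕ, ENNReal.ofReal (c * q^k) = ENNReal.ofReal c * (ENNReal.ofReal q)^k := by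
    intro k
    rw [ENNReal.ofReal_mul hc, ENNReal.ofReal_pow hq]
  simp_rw [this]
  rw [ENNReal.tsum_mul_left, ENNReal.tsum_geometric]

lemma far_le (g : E3 → E3) (hg : Measurable g) (x : E3) (b : ℝ) (hb : 3 < b) :
    ∫⁻ y in {y : E3 | 2 ≤ dist x y}, ENNReal.ofReal (‖g y‖ * dist x y ^ (-b))
      ≤ (ENNReal.ofReal ((2:ℝ)^((6:ℝ)-b)) * (1 - ENNReal.ofReal ((2:ℝ)^((3:ℝ)-b)))⁻¹)
          * dyad g x := by
  have hsub : {y : E3 | 2 ≤ dist x y} ⊆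
      ⋃ k : ℕ, {y : E3 | (2:ℝ)^((k:ℤ)+1) ≤ dist x y ∧ dist x y < (2:ℝ)^((k:ℤ)+1+1)} := by
    intro y hy
    obtain ⟨k, hk1, hk2⟩ := cover_far hy
    refine mem_iUnion.mpr ⟨k, hk1, ?_⟩
    have : (k:ℤ)+1+1 = (k:ℤ)+2 := by ring
    rw [this]
    exact hk2
  calc ∫⁻ y in {y : E3 | 2 ≤ dist x y}, ENNReal.ofReal (‖g y‖ * dist x y ^ (-b))
      ≤ ∫⁻ y in ⋃ k : ℕ, {y : E3 | (2:ℝ)^((k:ℤ)+1) ≤ dist x y ∧ dist x y < (2:ℝ)^((k:ℤ)+1+1)},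
          ENNReal.ofReal (‖g y‖ * dist x y ^ (-b)) := lintegral_mono_set hsub
    _ ≤ ∑' k : ℕ, ∫⁻ y in {y : E3 | (2:ℝ)^((k:ℤ)+1) ≤ dist x y ∧ dist x y < (2:ℝ)^((k:ℤ)+1+1)},
          ENNReal.ofReal (‖g y‖ * dist x y ^ (-b)) := lintegral_iUnion_le _ _
    _ ≤ ∑' k : ℕ, ENNReal.ofReal (((2:ℝ)^((k:ℤ)+1)) ^ (-b) * ((2:ℝ)^((k:ℤ)+1+1)) ^ (3:ℝ))
          * dyad g x :=
        ENNReal.tsum_le_tsum fun k => annulus_bound g hg x ((k:ℤ)+1) (-b) (by linarith)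
    _ = (∑' k : ℕ, ENNReal.ofReal ((2:ℝ)^((6:ℝ)-b) * ((2:ℝ)^((3:ℝ)-b))^k)) * dyad g x := by
        rw [ENNReal.tsum_mul_right]
        congr 1
        refine tsum_congr fun k => ?_
        congr 1
        have : (k:ℤ)+1+1 = (k:ℤ)+2 := by ring
        rw [this]
        exact const_far b k
    _ = _ := by rw [geom_sum _ _ (by positivity) (by positivity)]

lemma near_le (g : E3 → E3) (hg : Measurable g) (x : E3) (c : ℝ) (hc0 : 0 ≤ c) (hc3 : c < 3) :
    ∫⁻ y in ball x 4, ENNReal.ofReal (‖g y‖ * dist x y ^ (-c))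
      ≤ (ENNReal.ofReal ((2:ℝ)^((6:ℝ)-c)) * (1 - ENNReal.ofReal ((2:ℝ)^(c-(3:ℝ))))⁻¹)
          * dyad g x := by
  have hsub : ball x 4 ⊆ {x} ∪
      ⋃ k : ℕ, {y : E3 | (2:ℝ)^(1-(k:ℤ)) ≤ dist x y ∧ dist x y < (2:ℝ)^(1-(k:ℤ)+1)} := by
    intro y hy
    rcases eq_or_ne y x with h | h
    · exact Or.inl (by simp [h])
    · refine Or.inr ?_
      have h0 : 0 < dist x y := dist_pos.mpr (Ne.symm h)
      have h4 : dist x y < 4 := by rw [dist_comm]; exact mem_ball.mp hy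
      obtain ⟨k, hk1, hk2⟩ := cover_near h0 h4
      refine mem_iUnion.mpr ⟨k, hk1, ?_⟩
      have : 1-(k:ℤ)+1 = 2-(k:ℤ) := by ring
      rw [this]
      exact hk2
  calc ∫⁻ y in ball x 4, ENNReal.ofReal (‖g y‖ * dist x y ^ (-c))
      ≤ ∫⁻ y in {x} ∪
          ⋃ k : ℕ, {y : E3 | (2:ℝ)^(1-(k:ℤ)) ≤ dist x y ∧ dist x y < (2:ℝ)^(1-(k:ℤ)+1)},
          ENNReal.ofReal (‖g y‖ * dist x y ^ (-c)) := lintegral_mono_set hsub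
    _ ≤ (∫⁻ y in ({x} : Set E3), ENNReal.ofReal (‖g y‖ * dist x y ^ (-c)))
        + ∫⁻ y in ⋃ k : ℕ, {y : E3 | (2:ℝ)^(1-(k:ℤ)) ≤ dist x y ∧ dist x y < (2:ℝ)^(1-(k:ℤ)+1)},
          ENNReal.ofReal (‖g y‖ * dist x y ^ (-c)) := lintegral_union_le _ _ _
    _ ≤ 0 + ∑' k : ℕ, ∫⁻ y in {y : E3 | (2:ℝ)^(1-(k:ℤ)) ≤ dist x y ∧ dist x y < (2:ℝ)^(1-(k:ℤ)+1)},
          ENNReal.ofReal (‖g y‖ * dist x y ^ (-c)) := by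
        gcongr
        · rw [setLIntegral_measure_zero _ _ (measure_singleton x)]
        · exact lintegral_iUnion_le _ _
    _ ≤ 0 + ∑' k : ℕ, ENNReal.ofReal (((2:ℝ)^(1-(k:ℤ))) ^ (-c) * ((2:ℝ)^(1-(k:ℤ)+1)) ^ (3:ℝ))
          * dyad g x := by
        gcongr with k
        exact annulus_bound g hg x (1-(k:ℤ)) (-c) (by linarith)
    _ = (∑' k : ℕ, ENNReal.ofReal ((2:ℝ)^((6:ℝ)-c) * ((2:ℝ)^(c-(3:ℝ)))^k)) * dyad g x := by
        rw [zero_add, ENNReal.tsum_mul_right]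
        congr 1
        exact tsum_congr fun k => by rw [const_near c k]
    _ = _ := by rw [geom_sum _ _ (by positivity) (by positivity)]

lemma rpow_neg_sub_le {b t u : ℝ} (hb : 1 ≤ b) (ht : 0 < t) (htu : t ≤ u) :
    t ^ (-b) - u ^ (-b) ≤ b * (t ^ (-b) * t⁻¹) * (u - t) := by
  have hu : 0 < u := ht.trans_le htu
  have hA : 0 < t ^ b := Real.rpow_pos_of_pos ht b
  have hB : 0 < u ^ b := Real.rpow_pos_of_pos hu b
  set A := t ^ b
  set B := u ^ b
  have hber := one_add_mul_self_le_rpow_one_add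
    (s := t/u - 1) (by
      have h0 : (0:ℝ) ≤ t/u := by positivity
      linarith) hb
  rw [show 1 + (t/u - 1) = t/u by ring] at hber
  rw [Real.div_rpow ht.le hu.le] at hber
  have key : B - A ≤ b * B * (u - t) / u := by
    have h := mul_le_mul_of_nonneg_right hber hB.le
    rw [div_mul_cancel₀ _ hB.ne'] at h
    have expand : (1 + b*(t/u - 1)) * B = B + b*B*(t-u)/u := by field_simp
    rw [expand] at h
    have hid : b*B*(u-t)/u = -(b*B*(t-u)/u) := by ring
    linarith
  have e1 : t^(-b) = A⁻¹ := Real.rpow_neg ht.le b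
  have e2 : u^(-b) = B⁻¹ := Real.rpow_neg hu.le b
  rw [e1, e2]
  have c1 : A⁻¹ - B⁻¹ = (B - A)/(A*B) := by field_simp
  have c2 : (B - A)/(A*B) ≤ (b*B*(u-t)/u)/(A*B) :=
    div_le_div_of_nonneg_right key (by positivity)
  have c3 : (b*B*(u-t)/u)/(A*B) = b*(u-t)/(u*A) := by field_simp
  have c4 : b*(u-t)/(u*A) ≤ b*(u-t)/(t*A) :=
    div_le_div_of_nonneg_left (by nlinarith) (by positivity) (by nlinarith)
  have c5 : b*(u-t)/(t*A) = b * (A⁻¹ * t⁻¹) * (u - t) := by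
    rw [div_eq_mul_inv, mul_inv]
    ring
  linarith

lemma abs_rpow_neg_sub_le {b t u : ℝ} (hb : 1 ≤ b) (ht : 0 < t) (hu : 0 < u) :
    |t ^ (-b) - u ^ (-b)| ≤ b * ((min t u) ^ (-b) * (min t u)⁻¹) * |t - u| := by
  rcases le_total t u with h | h
  · rw [min_eq_left h,
      abs_of_nonneg (sub_nonneg.mpr (Real.rpow_le_rpow_of_nonpos ht h (by linarith))),
      abs_of_nonpos (by linarith : t - u ≤ 0)]
    have := rpow_neg_sub_le hb ht h
    linarith
  · rw [min_eq_right h,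
      abs_of_nonpos (sub_nonpos.mpr (Real.rpow_le_rpow_of_nonpos hu h (by linarith))),
      abs_of_nonneg (by linarith : 0 ≤ t - u)]
    have := rpow_neg_sub_le hb hu h
    linarith

lemma kernel_abs (a : ℝ) (ha : 1 ≤ a) (v w : E3) :
    |(inner ℝ v w : ℝ) / ‖w‖ ^ a| ≤ ‖v‖ * ‖w‖ ^ (1 - a) := by
  by_cases hw : w = 0
  · simp only [hw, inner_zero_right, zero_div, abs_zero]
    positivity
  · have hw0 : 0 < ‖w‖ := norm_pos_iff.mpr hw
    rw [abs_div, abs_of_nonneg (Real.rpow_nonneg (norm_nonneg w) a),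
      div_le_iff₀ (Real.rpow_pos_of_pos hw0 a)]
    calc |(inner ℝ v w : ℝ)| ≤ ‖v‖ * ‖w‖ := abs_real_inner_le_norm v w
      _ = ‖v‖ * ‖w‖ ^ (1 - a) * ‖w‖ ^ a := by
          rw [mul_assoc, ← Real.rpow_add hw0, sub_add_cancel, Real.rpow_one]

lemma kernel_diff {b : ℝ} (hb : 3 ≤ b) (v x z y : E3)
    (hx : ‖x‖ < 1) (hz : ‖z‖ < 1) (hy : 3 ≤ ‖y‖) :
    |(inner ℝ v (x - y) : ℝ) / ‖x - y‖ ^ b - (inner ℝ v (z - y) : ℝ) / ‖z - y‖ ^ b|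
      ≤ ((2 + 4*b) * 2^b) * (‖v‖ * ‖x - y‖ ^ (-b)) := by
  have hb0 : (0:ℝ) ≤ b := by linarith
  have hb1 : (1:ℝ) ≤ b := by linarith
  set t := ‖x - y‖ with htdef
  set u := ‖z - y‖ with hudef
  have ht2 : 2 ≤ t := by
    have h1 : ‖y‖ - ‖x‖ ≤ ‖x - y‖ := by
      have h := norm_sub_norm_le y x
      rwa [norm_sub_rev] at h
    simp only [htdef]; linarith
  have hu2 : 2 ≤ u := by
    have h1 : ‖y‖ - ‖z‖ ≤ ‖z - y‖ := by
      have h := norm_sub_norm_le y z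
      rwa [norm_sub_rev] at h
    simp only [hudef]; linarith
  have ht0 : 0 < t := by linarith
  have hu0 : 0 < u := by linarith
  have htyb : t ≤ ‖y‖ + 1 := by
    have := norm_sub_le x y
    simp only [htdef]; linarith
  have huyb : ‖y‖ - 1 ≤ u := by
    have h := norm_sub_norm_le y z
    rw [norm_sub_rev] at h
    simp only [hudef]; linarith
  have hut : t ≤ 2*u := by linarith
  have huyb2 : u ≤ ‖y‖ + 1 := by
    have := norm_sub_le z y
    simp only [hudef]; linarith
  have htyb2 : ‖y‖ - 1 ≤ t := by
    have h := norm_sub_norm_le y x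
    rw [norm_sub_rev] at h
    simp only [htdef]; linarith
  have hut2 : u ≤ 2*t := by linarith
  have hxz : ‖x - z‖ ≤ 2 := by
    have := norm_sub_le x z
    linarith
  have htu_diff : |t - u| ≤ 2 := by
    have h := abs_norm_sub_norm_le (x - y) (z - y)
    have h2 : x - y - (z - y) = x - z := by abel
    rw [h2] at h
    exact h.trans hxz
  set m := min t u with hmdef
  have hm0 : 0 < m := lt_min ht0 hu0
  have hmt : t/2 ≤ m := le_min (by linarith) (by linarith)
  have hum : u ≤ 2*m := by
    rcases min_choice t u with h | h <;> rw [hmdef, h] <;> linarith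
  have hrw : (inner ℝ v (x - y) : ℝ) / t ^ b - (inner ℝ v (z - y) : ℝ) / u ^ b
      = inner ℝ v ((t^(-b)) • (x - y) - (u^(-b)) • (z - y)) := by
    have e1 : (t:ℝ)^(-b) = (t^b)⁻¹ := Real.rpow_neg (norm_nonneg _) b
    have e2 : (u:ℝ)^(-b) = (u^b)⁻¹ := Real.rpow_neg (norm_nonneg _) b
    simp only [inner_sub_right, real_inner_smul_right, e1, e2]
    ring
  rw [hrw]
  have hD : (t^(-b)) • (x - y) - (u^(-b)) • (z - y)
      = (t^(-b)) • (x - z) + (t^(-b) - u^(-b)) • (z - y) := by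
    module
  have hmb : m^(-b) ≤ 2^b * t^(-b) := by
    have h1 : m^(-b) ≤ (t/2)^(-b) :=
      Real.rpow_le_rpow_of_nonpos (by positivity) hmt (by linarith)
    have h2 : ((t:ℝ)/2)^(-b) = 2^b * t^(-b) := by
      rw [Real.rpow_neg (by positivity : (0:ℝ) ≤ t/2), Real.div_rpow ht0.le
        (by norm_num : (0:ℝ) ≤ 2), Real.rpow_neg ht0.le, inv_div, div_eq_mul_inv]
    linarith
  have h2b1 : (1:ℝ) ≤ 2^b := by
    have := Real.rpow_le_rpow_of_exponent_le (by norm_num : (1:ℝ) ≤ 2) hb0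
    simpa using this
  have habs := abs_rpow_neg_sub_le hb1 ht0 hu0
  have hDnorm : ‖(t^(-b)) • (x - z) + (t^(-b) - u^(-b)) • (z - y)‖
      ≤ (2 + 4*b) * 2^b * t^(-b) := by
    have e2 : |t^(-b) - u^(-b)| * u ≤ 4*b*(2^b * t^(-b)) := by
      have s1 : |t^(-b) - u^(-b)| * u ≤ (b * (m^(-b) * m⁻¹) * 2) * (2*m) := by
        apply mul_le_mul _ hum hu0.le (by positivity)
        calc |t^(-b) - u^(-b)| ≤ b * (m^(-b) * m⁻¹) * |t - u| := by
              rw [hmdef]; exact habs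
          _ ≤ b * (m^(-b) * m⁻¹) * 2 := by
              apply mul_le_mul_of_nonneg_left htu_diff (by positivity)
      have s2 : (b * (m^(-b) * m⁻¹) * 2) * (2*m) = 4*b*m^(-b) := by
        field_simp
        ring
      have s3 : 4*b*m^(-b) ≤ 4*b*(2^b * t^(-b)) :=
        mul_le_mul_of_nonneg_left hmb (by positivity)
      linarith
    have e1 : t^(-b) * ‖x - z‖ ≤ t^(-b) * 2 :=
      mul_le_mul_of_nonneg_left hxz (by positivity)
    calc ‖(t^(-b)) • (x - z) + (t^(-b) - u^(-b)) • (z - y)‖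
        ≤ ‖(t^(-b)) • (x - z)‖ + ‖(t^(-b) - u^(-b)) • (z - y)‖ := norm_add_le _ _
      _ = t^(-b) * ‖x - z‖ + |t^(-b) - u^(-b)| * u := by
          rw [norm_smul, norm_smul, Real.norm_eq_abs, Real.norm_eq_abs,
            abs_of_nonneg (Real.rpow_nonneg ht0.le _)]
      _ ≤ t^(-b) * 2 + 4*b*(2^b * t^(-b)) := add_le_add e1 e2
      _ ≤ (2 + 4*b) * 2^b * t^(-b) := by nlinarith [Real.rpow_nonneg ht0.le (-b)]
  calc |(inner ℝ v ((t^(-b)) • (x - y) - (u^(-b)) • (z - y)) : ℝ)|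
      ≤ ‖v‖ * ‖(t^(-b)) • (x - y) - (u^(-b)) • (z - y)‖ := abs_real_inner_le_norm _ _
    _ ≤ ‖v‖ * ((2 + 4*b) * 2^b * t^(-b)) := by
        rw [hD]
        exact mul_le_mul_of_nonneg_left hDnorm (norm_nonneg v)
    _ = ((2 + 4*b) * 2^b) * (‖v‖ * t^(-b)) := by ring

end NSaux

open NSaux

/-- Lemma 2.2: for `0 < s < 1/2`, if `f = (−Δ)^{s−1} div g` (represented by the kernel
`g(y)·(x−y)/|x−y|^{3+2s}`), then
`‖f‖_{L¹(B₁)} ≤ C (|∫ f φ| + ‖Mg‖_{L^p(B₁)})`. -/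
theorem local_L1_control_fractional (s p q : ℝ) (hs0 : 0 < s) (hs : s < 1/2)
    (hp : 1 ≤ p) (hq : 1 ≤ q)
    (φ : E3 → ℝ) (hφs : ContDiff ℝ (⊤ : ℕ∞) φ) (hφ0 : ∀ x, 0 ≤ φ x)
    (hφsupp : tsupport φ ⊆ ball (0:E3) 1) (hφint : ∫ x : E3, φ x = 1) :
    ∃ C > (0:ℝ), ∀ (g : E3 → E3) (f : E3 → ℝ),
      Measurable g →
      (∫⁻ x in ball (0:E3) 1, (maxFn g x) ^ p) < ⊤ →
      MemLp f (ENNReal.ofReal q) volume →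
      (∀ᵐ x : E3, x ∈ ball (0:E3) 1 →
        (Integrable fun y : E3 => ‖g y‖ / ‖x - y‖ ^ (2 + 2*s)) ∧
        f x = ∫ y : E3, (inner ℝ (g y) (x - y) : ℝ) / ‖x - y‖ ^ (3 + 2*s)) →
      (∫⁻ x in ball (0:E3) 1, ENNReal.ofReal |f x|)
        ≤ ENNReal.ofReal C * (ENNReal.ofReal |∫ x : E3, f x * φ x|
            + (∫⁻ x in ball (0:E3) 1, (maxFn g x) ^ p) ^ (1/p)) := by
  classical
  set b : ℝ := 3 + 2*s with hbdef
  set c : ℝ := 2 + 2*s with hcdef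
  have hb3 : 3 < b := by rw [hbdef]; linarith
  have hb1 : (1:ℝ) ≤ b := by linarith
  have hc0 : (0:ℝ) ≤ c := by rw [hcdef]; linarith
  have hc3 : c < 3 := by rw [hcdef]; linarith
  have hexp : 1 - b = -c := by rw [hbdef, hcdef]; ring
  -- φ facts
  have hφcont : Continuous φ := hφs.continuous
  have hφc : HasCompactSupport φ :=
    Metric.isCompact_of_isClosed_isBounded (isClosed_tsupport φ)
      ((isBounded_ball).subset hφsupp)
  have hφI : Integrable φ := hφcont.integrable_of_hasCompactSupport hφc
  obtain ⟨Mφ, hMφ⟩ : ∃ C, ∀ x, ‖φ x‖ ≤ C := hφc.exists_bound_of_continuous hφcont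
  have hφ1 : ∫⁻ z, ENNReal.ofReal (φ z) = 1 := by
    rw [← MeasureTheory.ofReal_integral_eq_lintegral_ofReal hφI (ae_of_all _ hφ0), hφint,
      ENNReal.ofReal_one]
  have hφzero : ∀ z : E3, z ∉ ball (0:E3) 1 → φ z = 0 := fun z hz =>
    image_eq_zero_of_notMem_tsupport (fun hmem => hz (hφsupp hmem))
  -- ENNReal constants
  set Cnear : ℝ≥0∞ :=
    ENNReal.ofReal ((2:ℝ)^((6:ℝ)-c)) * (1 - ENNReal.ofReal ((2:ℝ)^(c-(3:ℝ))))⁻¹ with hCneardef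
  set Cfar : ℝ≥0∞ :=
    ENNReal.ofReal ((2:ℝ)^((6:ℝ)-b)) * (1 - ENNReal.ofReal ((2:ℝ)^((3:ℝ)-b)))⁻¹ with hCfardef
  set CK : ℝ≥0∞ := ENNReal.ofReal ((2 + 4*b) * 2^b) with hCKdef
  have hCnear_ne : Cnear ≠ ⊤ := by
    apply ENNReal.mul_ne_top ENNReal.ofReal_ne_top
    rw [ENNReal.inv_ne_top, ne_eq, tsub_eq_zero_iff_le, not_le]
    exact lt_of_lt_of_le (ENNReal.ofReal_lt_one.mpr
      (Real.rpow_lt_one_of_one_lt_of_neg (by norm_num) (by linarith))) le_rfl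
  have hCfar_ne : Cfar ≠ ⊤ := by
    apply ENNReal.mul_ne_top ENNReal.ofReal_ne_top
    rw [ENNReal.inv_ne_top, ne_eq, tsub_eq_zero_iff_le, not_le]
    exact lt_of_lt_of_le (ENNReal.ofReal_lt_one.mpr
      (Real.rpow_lt_one_of_one_lt_of_neg (by norm_num) (by linarith))) le_rfl
  set CA : ℝ≥0∞ := Cnear + CK * Cfar with hCAdef
  have hCA_ne : CA ≠ ⊤ :=
    ENNReal.add_ne_top.mpr ⟨hCnear_ne, ENNReal.mul_ne_top ENNReal.ofReal_ne_top hCfar_ne⟩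
  set V : ℝ≥0∞ := volume (ball (0:E3) 1) with hVdef
  have hV_ne : V ≠ ⊤ := measure_ball_lt_top.ne
  have hep : (0:ℝ) ≤ 1 - 1/p := by
    have : 1/p ≤ 1 := by
      rw [div_le_one (by linarith)]
      exact hp
    linarith
  have hVp_ne : V ^ (1 - 1/p) ≠ ⊤ := ENNReal.rpow_ne_top_of_nonneg hep hV_ne
  set E : ℝ≥0∞ := V + (CA + Cnear * ENNReal.ofReal Mφ * V) * V ^ (1 - 1/p) with hEdef
  have hE_ne : E ≠ ⊤ := by
    apply ENNReal.add_ne_top.mpr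
    refine ⟨hV_ne, ENNReal.mul_ne_top ?_ hVp_ne⟩
    exact ENNReal.add_ne_top.mpr ⟨hCA_ne,
      ENNReal.mul_ne_top (ENNReal.mul_ne_top hCnear_ne ENNReal.ofReal_ne_top) hV_ne⟩
  refine ⟨E.toReal + 1, by positivity, ?_⟩
  intro g f hg hMp hfq hrep
  set T : ℝ≥0∞ := ENNReal.ofReal |∫ x : E3, f x * φ x| with hTdef
  set J : ℝ≥0∞ := (∫⁻ x in ball (0:E3) 1, (maxFn g x) ^ p) ^ (1/p) with hJdef
  set K : E3 → E3 → ℝ := fun x y => (inner ℝ (g y) (x - y) : ℝ) / ‖x - y‖ ^ b with hKdef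
  -- measurability
  have hKmeas : ∀ x : E3, Measurable (K x) := by
    intro x
    apply Measurable.div
    · exact Measurable.inner (𝕜 := ℝ) hg (measurable_const.sub measurable_id)
    · exact ((measurable_const.sub measurable_id).norm).pow measurable_const
  have hKabs : ∀ x y : E3, |K x y| ≤ ‖g y‖ * ‖x - y‖ ^ (-c) := by
    intro x y
    have h := kernel_abs b hb1 (g y) (x - y)
    rwa [hexp] at h
  have hKbd : ∀ x y : E3, |K x y| ≤ ‖g y‖ / ‖x - y‖ ^ c := by
    intro x y
    have h := hKabs x y
    rwa [Real.rpow_neg (norm_nonneg _), ← div_eq_mul_inv] at h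
  have hKint : ∀ x : E3, (Integrable fun y : E3 => ‖g y‖ / ‖x - y‖ ^ c) →
      Integrable (K x) := by
    intro x hI
    refine hI.mono' (hKmeas x).aestronglyMeasurable (ae_of_all _ fun y => ?_)
    rw [Real.norm_eq_abs]
    exact hKbd x y
  -- near-field estimate
  have hnear : ∀ w : E3, w ∈ ball (0:E3) 1 →
      (∫⁻ y in ball (0:E3) 3, ENNReal.ofReal |K w y|) ≤ Cnear * dyad g w := by
    intro w hw
    have hw1 : ‖w‖ < 1 := mem_ball_zero_iff.mp hw
    have hsub : ball (0:E3) 3 ⊆ ball w 4 := by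
      intro y hy
      rw [mem_ball] at hy ⊢
      rw [dist_zero_right] at hy
      calc dist y w ≤ ‖y‖ + ‖w‖ := by
            rw [dist_eq_norm]
            exact norm_sub_le y w
        _ < 4 := by linarith
    refine le_trans (lintegral_mono_set hsub) (le_trans ?_ (near_le g hg w c hc0 hc3))
    refine lintegral_mono fun y => ENNReal.ofReal_le_ofReal ?_
    rw [dist_eq_norm]
    exact hKabs w y
  -- difference estimate
  have hdiff : ∀ x z : E3, x ∈ ball (0:E3) 1 → z ∈ ball (0:E3) 1 →
      (Integrable fun y : E3 => ‖g y‖ / ‖x - y‖ ^ c) → f x = ∫ y : E3, K x y →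
      (Integrable fun y : E3 => ‖g y‖ / ‖z - y‖ ^ c) → f z = ∫ y : E3, K z y →
      ENNReal.ofReal |f x - f z| ≤ CA * dyad g x + Cnear * dyad g z := by
    intro x z hx hz hIx hfx hIz hfz
    have hKIx := hKint x hIx
    have hKIz := hKint z hIz
    rw [hfx, hfz, ← integral_sub hKIx hKIz]
    have h1 : ENNReal.ofReal |∫ y, (K x y - K z y)| ≤
        ∫⁻ y, ENNReal.ofReal |K x y - K z y| := by
      rw [← Real.enorm_eq_ofReal_abs]
      refine le_trans (enorm_integral_le_lintegral_enorm _) ?_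
      simp_rw [Real.enorm_eq_ofReal_abs]
      exact le_rfl
    refine h1.trans ?_
    have hsplit : (∫⁻ y, ENNReal.ofReal |K x y - K z y|) ≤
        (∫⁻ y in ball (0:E3) 3, ENNReal.ofReal |K x y - K z y|) +
        ∫⁻ y in (ball (0:E3) 3)ᶜ, ENNReal.ofReal |K x y - K z y| := by
      rw [← setLIntegral_univ (fun y => ENNReal.ofReal |K x y - K z y|),
        ← union_compl_self (ball (0:E3) 3)]
      exact lintegral_union_le _ _ _
    refine hsplit.trans ?_
    have hball : (∫⁻ y in ball (0:E3) 3, ENNReal.ofReal |K x y - K z y|) ≤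
        Cnear * dyad g x + Cnear * dyad g z := by
      have hpt : ∀ y, ENNReal.ofReal |K x y - K z y| ≤
          ENNReal.ofReal |K x y| + ENNReal.ofReal |K z y| := fun y =>
        le_trans (ENNReal.ofReal_le_ofReal (abs_sub _ _)) ENNReal.ofReal_add_le
      calc (∫⁻ y in ball (0:E3) 3, ENNReal.ofReal |K x y - K z y|)
          ≤ ∫⁻ y in ball (0:E3) 3,
              (ENNReal.ofReal |K x y| + ENNReal.ofReal |K z y|) := lintegral_mono hpt
        _ = (∫⁻ y in ball (0:E3) 3, ENNReal.ofReal |K x y|) +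
              ∫⁻ y in ball (0:E3) 3, ENNReal.ofReal |K z y| :=
            lintegral_add_left ((hKmeas x).abs.ennreal_ofReal) _
        _ ≤ _ := add_le_add (hnear x hx) (hnear z hz)
    have hfar : (∫⁻ y in (ball (0:E3) 3)ᶜ, ENNReal.ofReal |K x y - K z y|) ≤
        CK * (Cfar * dyad g x) := by
      have hstep : (∫⁻ y in (ball (0:E3) 3)ᶜ, ENNReal.ofReal |K x y - K z y|)
          ≤ ∫⁻ y in (ball (0:E3) 3)ᶜ,
              ENNReal.ofReal ((2+4*b)*2^b) *
                ENNReal.ofReal (‖g y‖ * dist x y ^ (-b)) := by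
        refine setLIntegral_mono ?_ fun y hy => ?_
        · exact (measurable_const.mul ((hg.norm.mul
            (((measurable_const.sub measurable_id).norm).pow measurable_const)).ennreal_ofReal)) -- fix
        · have hy3 : 3 ≤ ‖y‖ := by
            have := hy
            rw [mem_compl_iff, mem_ball, dist_zero_right, not_lt] at this
            exact this
          have h := kernel_diff (b := b) (by linarith) (g y) x z y
            (mem_ball_zero_iff.mp hx) (mem_ball_zero_iff.mp hz) hy3
          rw [← ENNReal.ofReal_mul (by positivity), dist_eq_norm]
          exact ENNReal.ofReal_le_ofReal h
      refine hstep.trans ?_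
      rw [lintegral_const_mul' _ _ ENNReal.ofReal_ne_top]
      apply mul_le_mul_right
      refine le_trans (lintegral_mono_set ?_) (far_le g hg x b hb3)
      intro y hy
      rw [mem_compl_iff, mem_ball, dist_zero_right, not_lt] at hy
      have hx1 : ‖x‖ < 1 := mem_ball_zero_iff.mp hx
      have : ‖y‖ - ‖x‖ ≤ ‖x - y‖ := by
        have h := norm_sub_norm_le y x
        rwa [norm_sub_rev] at h
      show (2:ℝ) ≤ dist x y
      rw [dist_eq_norm]
      linarith
    calc _ ≤ (Cnear * dyad g x + Cnear * dyad g z) + CK * (Cfar * dyad g x) :=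
          add_le_add hball hfar
      _ = CA * dyad g x + Cnear * dyad g z := by rw [hCAdef]; ring
  -- integrability of f·φ
  have hfinB : IsFiniteMeasure (volume.restrict (ball (0:E3) 1)) :=
    ⟨by rw [Measure.restrict_apply_univ]; exact measure_ball_lt_top⟩
  have hfi : Integrable f (volume.restrict (ball (0:E3) 1)) := by
    have h1 : MemLp f (ENNReal.ofReal q) (volume.restrict (ball (0:E3) 1)) :=
      hfq.restrict _
    have h2 : (1:ℝ≥0∞) ≤ ENNReal.ofReal q := by
      rw [← ENNReal.ofReal_one]
      exact ENNReal.ofReal_le_ofReal hq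
    exact memLp_one_iff_integrable.mp (h1.mono_exponent h2)
  have hφf : Integrable (fun z => φ z * f z) := by
    have h2 : Integrable (fun z => φ z * f z) (volume.restrict (ball (0:E3) 1)) :=
      hfi.bdd_mul hφcont.aestronglyMeasurable (ae_of_all _ hMφ)
    have heq : (fun z => φ z * f z) = (ball (0:E3) 1).indicator (fun z => φ z * f z) := by
      funext z
      by_cases hz : z ∈ ball (0:E3) 1
      · rw [indicator_of_mem hz]
      · rw [indicator_of_notMem hz, hφzero z hz, zero_mul]
    rw [heq]
    exact (integrable_indicator_iff measurableSet_ball).mpr h2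
  have hfφ : Integrable (fun z => f z * φ z) :=
    hφf.congr (ae_of_all _ fun z => mul_comm _ _)
  -- Dφ
  set Dφ : ℝ≥0∞ := ∫⁻ z, ENNReal.ofReal (φ z) * dyad g z with hDφdef
  set L : ℝ≥0∞ := ∫⁻ z in ball (0:E3) 1, dyad g z with hLdef
  have hDφL : Dφ ≤ ENNReal.ofReal Mφ * L := by
    have hpt : ∀ z, ENNReal.ofReal (φ z) * dyad g z ≤
        (ball (0:E3) 1).indicator (fun z => ENNReal.ofReal Mφ * dyad g z) z := by
      intro z
      by_cases hz : z ∈ ball (0:E3) 1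
      · rw [indicator_of_mem hz]
        refine mul_le_mul_left (ENNReal.ofReal_le_ofReal ?_) _
        exact (le_abs_self _).trans ((Real.norm_eq_abs _).symm ▸ hMφ z)
      · simp [indicator_of_notMem hz, hφzero z hz]
    calc Dφ ≤ ∫⁻ z, (ball (0:E3) 1).indicator (fun z => ENNReal.ofReal Mφ * dyad g z) z :=
          lintegral_mono hpt
      _ = ∫⁻ z in ball (0:E3) 1, ENNReal.ofReal Mφ * dyad g z :=
          lintegral_indicator measurableSet_ball _
      _ = ENNReal.ofReal Mφ * L := lintegral_const_mul' _ _ ENNReal.ofReal_ne_top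
  -- Hölder
  have hdm : Measurable (dyad g) := dyad_meas g hg
  have hLJ : L ≤ V ^ (1 - 1/p) * J := by
    have hmono : (∫⁻ z in ball (0:E3) 1, dyad g z ^ p) ≤
        ∫⁻ x in ball (0:E3) 1, maxFn g x ^ p :=
      lintegral_mono fun z => ENNReal.rpow_le_rpow (dyad_le_maxFn g z) (by linarith)
    rcases eq_or_lt_of_le hp with hp1 | hp1
    · subst hp1
      simp only [ENNReal.rpow_one] at hmono
      have h0 : (1:ℝ) - 1/1 = 0 := by norm_num
      have h1 : (1:ℝ)/1 = 1 := by norm_num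
      rw [h0, ENNReal.rpow_zero, one_mul, hJdef, h1, ENNReal.rpow_one]
      simpa [ENNReal.rpow_one] using hmono
    · have hpq : p.HolderConjugate (Real.conjExponent p) :=
        Real.HolderConjugate.conjExponent hp1
      have hH := ENNReal.lintegral_mul_le_Lp_mul_Lq (volume.restrict (ball (0:E3) 1)) hpq
        hdm.aemeasurable (aemeasurable_const (b := (1:ℝ≥0∞)))
      simp only [Pi.mul_apply, mul_one, ENNReal.one_rpow] at hH
      rw [setLIntegral_const, one_mul] at hH
      have hq' : 1 / Real.conjExponent p = 1 - 1/p := by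
        rw [Real.conjExponent]
        field_simp
      rw [hq'] at hH
      calc L ≤ (∫⁻ z in ball (0:E3) 1, dyad g z ^ p) ^ (1/p) * V ^ (1 - 1/p) := hH
        _ ≤ J * V ^ (1 - 1/p) :=
            mul_le_mul_left (ENNReal.rpow_le_rpow hmono (by positivity)) _
        _ = V ^ (1 - 1/p) * J := mul_comm _ _
  -- pointwise bound for good x
  have hx_bound : ∀ x : E3, x ∈ ball (0:E3) 1 →
      (Integrable fun y : E3 => ‖g y‖ / ‖x - y‖ ^ c) → f x = ∫ y : E3, K x y →
      ENNReal.ofReal |f x| ≤ (T + Cnear * Dφ) + CA * dyad g x := by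
    intro x hx hIx hfx
    have hint1 : Integrable (fun z => φ z * f x) := hφI.mul_const (f x)
    have hid : ∫ z, φ z * (f x - f z) = f x - ∫ z, φ z * f z := by
      have he : (fun z => φ z * (f x - f z)) = fun z => φ z * f x - φ z * f z :=
        funext fun z => by ring
      rw [he, integral_sub hint1 hφf, integral_mul_const, hφint, one_mul]
    have h2 : |f x| ≤ |∫ z, φ z * (f x - f z)| + |∫ z, f z * φ z| := by
      have hcomm : ∫ z, φ z * f z = ∫ z, f z * φ z := by
        simp_rw [mul_comm]
      rw [hid, hcomm]
      calc |f x| = |(f x - ∫ z, f z * φ z) + ∫ z, f z * φ z| := by ring_nf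
        _ ≤ |f x - ∫ z, f z * φ z| + |∫ z, f z * φ z| := abs_add_le _ _
    have h3 : ENNReal.ofReal |f x| ≤
        ENNReal.ofReal |∫ z, φ z * (f x - f z)| + T := by
      refine le_trans (ENNReal.ofReal_le_ofReal h2) ?_
      exact ENNReal.ofReal_add_le
    have h4 : ENNReal.ofReal |∫ z, φ z * (f x - f z)| ≤
        ∫⁻ z, ENNReal.ofReal (φ z) * ENNReal.ofReal |f x - f z| := by
      rw [← Real.enorm_eq_ofReal_abs]
      refine le_trans (enorm_integral_le_lintegral_enorm _) ?_
      refine lintegral_mono fun z => ?_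
      rw [Real.enorm_eq_ofReal_abs, abs_mul, abs_of_nonneg (hφ0 z),
        ENNReal.ofReal_mul (hφ0 z)]
    have h5 : (∫⁻ z, ENNReal.ofReal (φ z) * ENNReal.ofReal |f x - f z|) ≤
        CA * dyad g x + Cnear * Dφ := by
      have hae2 : ∀ᵐ z : E3, ENNReal.ofReal (φ z) * ENNReal.ofReal |f x - f z| ≤
          ENNReal.ofReal (φ z) * (CA * dyad g x) +
          Cnear * (ENNReal.ofReal (φ z) * dyad g z) := by
        filter_upwards [hrep] with z hzG
        by_cases hz : z ∈ ball (0:E3) 1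
        · obtain ⟨hIz, hfz⟩ := hzG hz
          have hd := hdiff x z hx hz hIx hfx hIz hfz
          calc ENNReal.ofReal (φ z) * ENNReal.ofReal |f x - f z|
              ≤ ENNReal.ofReal (φ z) * (CA * dyad g x + Cnear * dyad g z) :=
                mul_le_mul_right hd _
            _ = ENNReal.ofReal (φ z) * (CA * dyad g x) +
                Cnear * (ENNReal.ofReal (φ z) * dyad g z) := by ring
        · simp [hφzero z hz]
      refine le_trans (lintegral_mono_ae hae2) ?_
      rw [lintegral_add_left ((hφcont.measurable.ennreal_ofReal).mul_const _)]
      rw [lintegral_mul_const _ hφcont.measurable.ennreal_ofReal, hφ1, one_mul]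
      rw [lintegral_const_mul' _ _ hCnear_ne]
    calc ENNReal.ofReal |f x| ≤ ENNReal.ofReal |∫ z, φ z * (f x - f z)| + T := h3
      _ ≤ (CA * dyad g x + Cnear * Dφ) + T := add_le_add (h4.trans h5) le_rfl
      _ = (T + Cnear * Dφ) + CA * dyad g x := by ring
  -- final integration
  have hmain : ∀ᵐ x ∂(volume.restrict (ball (0:E3) 1)),
      ENNReal.ofReal |f x| ≤ (T + Cnear * Dφ) + CA * dyad g x := by
    refine (ae_restrict_iff' measurableSet_ball).mpr ?_
    filter_upwards [hrep] with x hGx hx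
    obtain ⟨hIx, hfx⟩ := hGx hx
    exact hx_bound x hx hIx hfx
  calc (∫⁻ x in ball (0:E3) 1, ENNReal.ofReal |f x|)
      ≤ ∫⁻ x in ball (0:E3) 1, ((T + Cnear * Dφ) + CA * dyad g x) :=
        lintegral_mono_ae hmain
    _ = (T + Cnear * Dφ) * V + CA * L := by
        rw [lintegral_add_left measurable_const, setLIntegral_const,
          lintegral_const_mul' _ _ hCA_ne]
    _ ≤ (T + Cnear * (ENNReal.ofReal Mφ * (V ^ (1 - 1/p) * J))) * V +
          CA * (V ^ (1 - 1/p) * J) := by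
        gcongr
        exact hDφL.trans (mul_le_mul_right hLJ _)
    _ = V * T + (Cnear * ENNReal.ofReal Mφ * V * V ^ (1 - 1/p) + CA * V ^ (1 - 1/p)) * J := by
        ring
    _ ≤ E * T + E * J := by
        refine add_le_add (mul_le_mul_left le_self_add T) (mul_le_mul_left ?_ J)
        calc Cnear * ENNReal.ofReal Mφ * V * V ^ (1 - 1/p) + CA * V ^ (1 - 1/p)
            = (CA + Cnear * ENNReal.ofReal Mφ * V) * V ^ (1 - 1/p) := by ring
          _ ≤ E := le_add_self
    _ = E * (T + J) := (mul_add E T J).symm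
    _ ≤ ENNReal.ofReal (E.toReal + 1) * (T + J) := by
        refine mul_le_mul_left ?_ _
        calc E = ENNReal.ofReal E.toReal := (ENNReal.ofReal_toReal hE_ne).symm
          _ ≤ ENNReal.ofReal (E.toReal + 1) := ENNReal.ofReal_le_ofReal (by linarith)
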